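/- arXiv:1112.0149 — 5 statements merged into one kernel-verified Lean document; each statement's English description precedes it below -/
import Mathlib

section
/- Let d > 0 and let V be a real number with 0 ≤ V < d/2. For the function f(τ) = 1/(d - 2Vτ) on [0,1] and any 0 ≤ s < t ≤ 1, the strict inequality (t - s)/(d - V(t+s)) < ∫_s^t dτ/(d - 2Vτ) holds, provided V > 0. -/
/-!
The integrand `f τ = 1 / (d - 2Vτ)` is strictly convex on `[s, t]`, and the left-hand side is
`(t - s) * f ((s + t) / 2)`. So the claim is the strict midpoint half of the Hermite–Hadamard
inequality: pairing `x` with its reflection `s + t - x`, convexity gives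
`2 f ((s + t) / 2) ≤ f x + f (s + t - x)`, strictly at the endpoints, and integrating over `[s, t]`
gives the result since the reflection preserves the integral.
-/

open Set intervalIntegral

theorem ConvexOn.two_mul_apply_midpoint_le {s : Set ℝ} {f : ℝ → ℝ} (hf : ConvexOn ℝ s f)
    {x y : ℝ} (hx : x ∈ s) (hy : y ∈ s) : 2 * f ((x + y) / 2) ≤ f x + f y := by
  have := hf.2 hx hy (by norm_num : (0 : ℝ) ≤ 1 / 2) (by norm_num : (0 : ℝ) ≤ 1 / 2) (by norm_num)
  simp only [smul_eq_mul] at this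
  rw [show (x + y) / 2 = 1 / 2 * x + 1 / 2 * y by ring]
  linarith

theorem StrictConvexOn.two_mul_apply_midpoint_lt {s : Set ℝ} {f : ℝ → ℝ}
    (hf : StrictConvexOn ℝ s f) {x y : ℝ} (hx : x ∈ s) (hy : y ∈ s) (hxy : x ≠ y) :
    2 * f ((x + y) / 2) < f x + f y := by
  have := hf.2 hx hy hxy (by norm_num : (0 : ℝ) < 1 / 2) (by norm_num : (0 : ℝ) < 1 / 2)
    (by norm_num)
  simp only [smul_eq_mul] at this
  rw [show (x + y) / 2 = 1 / 2 * x + 1 / 2 * y by ring]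
  linarith

theorem StrictConvexOn.comp_mul_add {s : Set ℝ} {f : ℝ → ℝ} (hf : StrictConvexOn ℝ s f)
    {a : ℝ} (ha : a ≠ 0) (b : ℝ) :
    StrictConvexOn ℝ ((fun x ↦ a * x + b) ⁻¹' s) (fun x ↦ f (a * x + b)) := by
  refine ⟨hf.1.affine_preimage ((a • AffineMap.id ℝ ℝ) + AffineMap.const ℝ ℝ b), ?_⟩
  intro x hx y hy hxy p q hp hq hpq
  have hne : a * x + b ≠ a * y + b := by simpa [ha] using hxy
  convert hf.2 hx hy hne hp hq hpq using 2
  simp only [smul_eq_mul]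
  linear_combination (-b) * hpq

theorem StrictConvexOn.mul_midpoint_lt_integral {f : ℝ → ℝ} {a b : ℝ} (hab : a < b)
    (hf : StrictConvexOn ℝ (Icc a b) f) (hfc : ContinuousOn f (Icc a b)) :
    (b - a) * f ((a + b) / 2) < ∫ x in a..b, f x := by
  have hreflect : MapsTo (fun x ↦ a + b - x) (Icc a b) (Icc a b) := fun x hx ↦
    ⟨by linarith [hx.2], by linarith [hx.1]⟩
  have hfc' : ContinuousOn (fun x ↦ f (a + b - x)) (Icc a b) :=
    hfc.comp (by fun_prop) hreflect
  have hle : ∀ x ∈ Ioc a b, 2 * f ((a + b) / 2) ≤ f x + f (a + b - x) := fun x hx ↦ by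
    simpa using hf.convexOn.two_mul_apply_midpoint_le (Ioc_subset_Icc_self hx)
      (hreflect (Ioc_subset_Icc_self hx))
  have hlt : 2 * f ((a + b) / 2) < f a + f (a + b - a) := by
    simpa using hf.two_mul_apply_midpoint_lt (left_mem_Icc.2 hab.le)
      (hreflect (left_mem_Icc.2 hab.le)) (by linarith : a ≠ a + b - a)
  have hsum := integral_lt_integral_of_continuousOn_of_le_of_exists_lt hab continuousOn_const
    (g := fun x ↦ f x + f (a + b - x)) (hfc.add hfc') hle ⟨a, left_mem_Icc.2 hab.le, hlt⟩
  have hsymm : ∫ x in a..b, f (a + b - x) = ∫ x in a..b, f x := by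
    simp [integral_comp_sub_left]
  rw [integral_add (hfc.intervalIntegrable_of_Icc hab.le) (hfc'.intervalIntegrable_of_Icc hab.le),
    hsymm, integral_const, smul_eq_mul] at hsum
  linarith

theorem chord_lt_integral_general (d V s t : ℝ) (hV0 : 0 < V) (hV : V < d / 2)
    (hst : s < t) (ht : t ≤ 1) :
    (t - s) / (d - V * (t + s)) < ∫ τ in s..t, 1 / (d - 2 * V * τ) := by
  have hpos : ∀ τ ∈ Icc s t, 0 < -(2 * V) * τ + d := fun τ hτ ↦ by
    nlinarith [hτ.2]
  have hconv : StrictConvexOn ℝ (Icc s t) fun τ ↦ 1 / (d - 2 * V * τ) := by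
    have hinv : StrictConvexOn ℝ (Ioi 0) fun x : ℝ ↦ x⁻¹ := by
      simpa using strictConvexOn_zpow (m := -1) (by norm_num) (by norm_num)
    refine ((hinv.comp_mul_add (neg_ne_zero.2 (by positivity)) d).subset hpos
      (convex_Icc s t)).congr fun τ _ ↦ ?_
    simp only [one_div]; ring_nf
  have hcont : ContinuousOn (fun τ ↦ 1 / (d - 2 * V * τ)) (Icc s t) :=
    continuousOn_const.div (by fun_prop) fun τ hτ ↦ by linarith [hpos τ hτ]
  calc (t - s) / (d - V * (t + s)) = (t - s) * (1 / (d - 2 * V * ((s + t) / 2))) := by ring_nf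
    _ < _ := hconv.mul_midpoint_lt_integral hst hcont

/-- For `d > 0`, `0 < V < d/2`, and `0 ≤ s < t ≤ 1`, the strict inequality
`(t - s)/(d - V(t+s)) < ∫_s^t dτ/(d - 2Vτ)` holds. -/
theorem chord_lt_integral (d V s t : ℝ) (hd : 0 < d) (hV0 : 0 < V) (hV : V < d / 2)
    (hs : 0 ≤ s) (hst : s < t) (ht : t ≤ 1) :
    (t - s) / (d - V * (t + s)) < ∫ τ in s..t, 1 / (d - 2 * V * τ) :=
  chord_lt_integral_general d V s t hV0 hV hst ht
end

section
/- Define M_⋆ : [0, 1/2) → ℝ piecewise by M_⋆(x) = (n/2)·arcsin(4π/(π²+4)) + (1/2)·arcsin(π(x − κ_n)/(1 − 2κ_n)) for x ∈ [κ_n, κ_{n+1}), where κ_n = (1 − ((π²−4)/(π²+4))^n)/2. Then M_⋆ is continuous on [0, 1/2). -/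
open Real


noncomputable def rrAux : ℝ := (π ^ 2 - 4) / (π ^ 2 + 4)
noncomputable def kapAux (n : ℕ) : ℝ := (1 - rrAux ^ n) / 2
noncomputable def FaAux (n : ℕ) (x : ℝ) : ℝ :=
  (n : ℝ) / 2 * Real.arcsin (4 * π / (π ^ 2 + 4))
    + 1 / 2 * Real.arcsin (π * (x - kapAux n) / (1 - 2 * kapAux n))

lemma pi_sq_gt : (4 : ℝ) < π ^ 2 := by nlinarith [Real.pi_gt_three]

lemma rr_pos : 0 < rrAux := by
  have := pi_sq_gt
  exact div_pos (by linarith) (by positivity)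

lemma rr_lt_one : rrAux < 1 := by
  have h : (0:ℝ) < π ^ 2 + 4 := by positivity
  unfold rrAux
  rw [div_lt_one h]; linarith

lemma kap_lt (n : ℕ) : kapAux n < kapAux (n + 1) := by
  unfold kapAux
  have : rrAux ^ (n+1) < rrAux ^ n := by
    rw [pow_succ]
    exact mul_lt_of_lt_one_right (pow_pos rr_pos n) rr_lt_one
  linarith

lemma kap_zero : kapAux 0 = 0 := by simp [kapAux]

lemma Fa_cont (n : ℕ) : Continuous (FaAux n) := by
  unfold FaAux
  exact continuous_const.add (continuous_const.mul (Real.continuous_arcsin.comp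
    (((continuous_const.mul (continuous_id.sub continuous_const)).div_const _))))

lemma junction (n : ℕ) : FaAux n (kapAux (n + 1)) = FaAux (n + 1) (kapAux (n + 1)) := by
  have hden : (0:ℝ) < π ^ 2 + 4 := by positivity
  have hrn : rrAux ^ n ≠ 0 := (pow_pos rr_pos n).ne'
  have h1 : π * (kapAux (n+1) - kapAux n) / (1 - 2 * kapAux n) = 4 * π / (π ^ 2 + 4) := by
    have hk : (1:ℝ) - 2 * kapAux n = rrAux ^ n := by unfold kapAux; ring
    have hd : kapAux (n+1) - kapAux n = rrAux ^ n * (1 - rrAux) / 2 := by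
      unfold kapAux; rw [pow_succ]; ring
    rw [hk, hd]
    rw [show π * (rrAux ^ n * (1 - rrAux) / 2) / rrAux ^ n = π * (1 - rrAux) / 2 by
      field_simp]
    unfold rrAux
    field_simp
    ring
  have h2 : π * (kapAux (n+1) - kapAux (n+1)) / (1 - 2 * kapAux (n+1)) = 0 := by
    simp
  unfold FaAux
  rw [h1, h2, Real.arcsin_zero]
  push_cast
  ring

/-- Any function `M` that on each interval `[κ n, κ (n+1))` (where
`κ n = (1 − ((π²−4)/(π²+4))^n)/2`) equals
`(n/2) arcsin(4π/(π²+4)) + (1/2) arcsin(π(x − κ n)/(1 − 2 κ n))`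
is continuous on `[0, 1/2)`. -/
theorem Mstar_continuousOn (M : ℝ → ℝ)
    (hM : ∀ n : ℕ, ∀ x ∈ Set.Ico ((1 - ((π ^ 2 - 4) / (π ^ 2 + 4)) ^ n) / 2)
        ((1 - ((π ^ 2 - 4) / (π ^ 2 + 4)) ^ (n + 1)) / 2),
      M x = (n : ℝ) / 2 * Real.arcsin (4 * π / (π ^ 2 + 4))
          + 1 / 2 * Real.arcsin (π * (x - (1 - ((π ^ 2 - 4) / (π ^ 2 + 4)) ^ n) / 2)
              / (1 - 2 * ((1 - ((π ^ 2 - 4) / (π ^ 2 + 4)) ^ n) / 2)))) :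
    ContinuousOn M (Set.Ico (0 : ℝ) (1 / 2)) := by
  have hM' : ∀ (n : ℕ), ∀ y ∈ Set.Ico (kapAux n) (kapAux (n + 1)), M y = FaAux n y := by
    intro n y hy
    exact hM n y hy
  intro x hx
  obtain ⟨hx0, hx2⟩ := hx
  have hex : ∃ n, x < kapAux (n + 1) := by
    obtain ⟨n, hn⟩ := exists_pow_lt_of_lt_one (show (0:ℝ) < 1 - 2 * x by linarith) rr_lt_one
    refine ⟨n, lt_trans ?_ (kap_lt n)⟩
    unfold kapAux; linarith
  have hxlt : x < kapAux (Nat.find hex + 1) := Nat.find_spec hex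
  have hxge : kapAux (Nat.find hex) ≤ x := by
    cases hn : Nat.find hex with
    | zero => rw [kap_zero]; exact hx0
    | succ m =>
      have h2 := Nat.find_min hex (m := m) (by omega)
      push_neg at h2
      exact h2
  set n := Nat.find hex with hndef
  clear_value n
  rcases eq_or_lt_of_le hxge with heq | hlt
  · -- x = kapAux n  (junction point)
    have hB : ContinuousWithinAt M (Set.Ico (kapAux n) (kapAux (n + 1))) x :=
      ((Fa_cont n).continuousAt.continuousWithinAt).congr (fun y hy => hM' n y hy)
        (hM' n x ⟨heq.le, hxlt⟩)
    have hA : ContinuousWithinAt M (Set.Ico (kapAux (n - 1)) (kapAux n)) x := by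
      cases n with
      | zero =>
        rw [Set.Ico_self]
        simp [ContinuousWithinAt, nhdsWithin_empty]
      | succ m =>
        have hMx : M x = FaAux m x := by
          rw [hM' (m + 1) x ⟨heq.le, hxlt⟩, ← heq, ← junction m]
        show Filter.Tendsto M _ (nhds (M x))
        rw [hMx]
        simp only [Nat.add_sub_cancel]
        exact Filter.Tendsto.congr'
          (Filter.eventually_of_mem self_mem_nhdsWithin (fun y hy => (hM' m y hy).symm))
          (((Fa_cont m).tendsto x).mono_left nhdsWithin_le_nhds)
    have hU := hA.union hB
    refine hU.mono_of_mem_nhdsWithin ?_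
    cases n with
    | zero =>
      have hV : Set.Iio (kapAux 1) ∈ nhds x := isOpen_Iio.mem_nhds hxlt
      refine Filter.mem_of_superset
        (Filter.inter_mem (mem_nhdsWithin_of_mem_nhds hV) self_mem_nhdsWithin) ?_
      rintro y ⟨hy1, hy2, -⟩
      exact Or.inr ⟨kap_zero ▸ hy2, hy1⟩
    | succ m =>
      have hV : Set.Ioo (kapAux m) (kapAux (m + 2)) ∈ nhds x := by
        refine isOpen_Ioo.mem_nhds ⟨?_, ?_⟩
        · rw [← heq]; exact kap_lt m
        · rw [← heq]; exact kap_lt (m + 1)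
      refine Filter.mem_of_superset (mem_nhdsWithin_of_mem_nhds hV) ?_
      rintro y ⟨hy1, hy2⟩
      simp only [Nat.add_sub_cancel]
      rcases lt_or_ge y (kapAux (m + 1)) with h | h
      · exact Or.inl ⟨hy1.le, h⟩
      · exact Or.inr ⟨h, hy2⟩
  · -- interior point
    have hnb : Set.Ioo (kapAux n) (kapAux (n + 1)) ∈ nhds x := isOpen_Ioo.mem_nhds ⟨hlt, hxlt⟩
    have heqv : M =ᶠ[nhds x] FaAux n :=
      Filter.eventuallyEq_of_mem hnb (fun y hy => hM' n y ⟨hy.1.le, hy.2⟩)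
    exact ((Fa_cont n).continuousAt.congr heqv.symm).continuousWithinAt
end

section
/- The one-sided derivatives of M_⋆ agree at each junction point κ_n: lim_{x↑κ_n} M_⋆'(x) = lim_{x↓κ_n} M_⋆'(x) = (π/2)/(1 − 2κ_n), so M_⋆ is continuously differentiable on (0, 1/2). -/
open Real

/-!
On `[κ n, κ (n + 1)]` the function is `arcsin` of an affine map whose value runs from `0`
to `σ = 4π/(π² + 4)`. With `q = (π² - 4)/(π² + 4)` we have `q² + σ² = 1`, so at the right end
the slope picks up the factor `1/√(1 - σ²) = 1/q`: exactly the factor by which the slope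
`π/(1 - 2κ n) = π/qⁿ` of the affine map grows from one piece to the next. The values match
because `arcsin σ` is the increment of the constant term. Hence adjacent pieces glue with equal
values and equal derivatives, and `M` is `C¹`.
-/

open Set Filter

theorem hasDerivAt_of_eqOn_Ioc_of_eqOn_Ico {f g h : ℝ → ℝ} {a b c d : ℝ} (hac : a < c)
    (hcb : c < b) (hfg : EqOn f g (Ioc a c)) (hfh : EqOn f h (Ico c b)) (hg : HasDerivAt g d c)
    (hh : HasDerivAt h d c) : HasDerivAt f d c := by
  have hleft : HasDerivWithinAt f d (Iic c) c :=
    hg.hasDerivWithinAt.congr_of_eventuallyEq (eventuallyEq_of_mem (Ioc_mem_nhdsLE hac) hfg)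
      (hfg ⟨hac, le_rfl⟩)
  have hright : HasDerivWithinAt f d (Ici c) c :=
    hh.hasDerivWithinAt.congr_of_eventuallyEq (eventuallyEq_of_mem (Ico_mem_nhdsGE hcb) hfh)
      (hfh ⟨le_rfl, hcb⟩)
  simpa only [Iic_union_Ici, hasDerivWithinAt_univ] using hleft.union hright

theorem continuousAt_of_eqOn_Ioc_of_eqOn_Ico {f g h : ℝ → ℝ} {a b c : ℝ} (hac : a < c)
    (hcb : c < b) (hfg : EqOn f g (Ioc a c)) (hfh : EqOn f h (Ico c b)) (hg : ContinuousAt g c)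
    (hh : ContinuousAt h c) : ContinuousAt f c :=
  continuousAt_iff_continuous_left_right.2
    ⟨hg.continuousWithinAt.congr_of_eventuallyEq (eventuallyEq_of_mem (Ioc_mem_nhdsLE hac) hfg)
        (hfg ⟨hac, le_rfl⟩),
      hh.continuousWithinAt.congr_of_eventuallyEq (eventuallyEq_of_mem (Ico_mem_nhdsGE hcb) hfh)
        (hfh ⟨le_rfl, hcb⟩)⟩

namespace Mstar

noncomputable def q : ℝ := (π ^ 2 - 4) / (π ^ 2 + 4)

noncomputable def σ : ℝ := 4 * π / (π ^ 2 + 4)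

noncomputable def κ (n : ℕ) : ℝ := (1 - q ^ n) / 2

noncomputable def arg (n : ℕ) (x : ℝ) : ℝ := π * (x - κ n) / (1 - 2 * κ n)

noncomputable def piece (n : ℕ) (x : ℝ) : ℝ := (n : ℝ) / 2 * arcsin σ + 1 / 2 * arcsin (arg n x)

noncomputable def pieceDeriv (n : ℕ) (x : ℝ) : ℝ := π / (2 * (1 - 2 * κ n) * √(1 - arg n x ^ 2))

theorem four_lt_pi_sq : 4 < π ^ 2 := by nlinarith [pi_gt_three]

theorem q_pos : 0 < q := div_pos (by linarith [four_lt_pi_sq]) (by positivity)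

theorem q_lt_one : q < 1 := by
  rw [q, div_lt_one (by positivity)]
  linarith

theorem q_sq_add_σ_sq : q ^ 2 + σ ^ 2 = 1 := by
  rw [q, σ]
  field_simp
  ring

theorem one_sub_q : 1 - q = 8 / (π ^ 2 + 4) := by
  rw [q]
  field_simp
  ring

theorem one_sub_two_mul_κ (n : ℕ) : 1 - 2 * κ n = q ^ n := by
  rw [κ]
  ring

theorem κ_zero : κ 0 = 0 := by simp [κ]

theorem κ_lt_half (n : ℕ) : κ n < 1 / 2 := by
  have := pow_pos q_pos n
  rw [κ]
  linarith

theorem κ_strictMono : StrictMono κ := by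
  refine strictMono_nat_of_lt_succ fun n => ?_
  have : q ^ (n + 1) < q ^ n := pow_lt_pow_right_of_lt_one₀ q_pos q_lt_one n.lt_succ_self
  rw [κ, κ]
  linarith

theorem exists_lt_κ {x : ℝ} (hx : x < 1 / 2) : ∃ n, x < κ n := by
  obtain ⟨n, hn⟩ := exists_pow_lt_of_lt_one (by linarith : 0 < 1 - 2 * x) q_lt_one
  exact ⟨n, by rw [κ]; linarith⟩

theorem exists_mem_Ioc {x : ℝ} (hx0 : 0 < x) (hx : x < 1 / 2) :
    ∃ n, x ∈ Ioc (κ n) (κ (n + 1)) := by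
  obtain ⟨n, hn, hn'⟩ := Nat.exists_not_and_succ_of_not_zero_of_exists (p := (x ≤ κ ·))
    (by rw [κ_zero]; exact not_le.2 hx0) ((exists_lt_κ hx).imp fun _ => le_of_lt)
  exact ⟨n, not_le.1 hn, hn'⟩

theorem exists_mem_Ico {x : ℝ} (hx0 : 0 ≤ x) (hx : x < 1 / 2) :
    ∃ n, x ∈ Ico (κ n) (κ (n + 1)) := by
  obtain ⟨n, hn, hn'⟩ := Nat.exists_not_and_succ_of_not_zero_of_exists (p := (x < κ ·))
    (by rw [κ_zero]; exact not_lt.2 hx0) (exists_lt_κ hx)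
  exact ⟨n, not_lt.1 hn, hn'⟩

theorem arg_κ (n : ℕ) : arg n (κ n) = 0 := by simp [arg]

theorem arg_κ_succ (n : ℕ) : arg n (κ (n + 1)) = σ := by
  have hqn : q ^ n ≠ 0 := (pow_pos q_pos n).ne'
  have hκ : κ (n + 1) - κ n = q ^ n * (1 - q) / 2 := by rw [κ, κ, pow_succ]; ring
  rw [arg, hκ, one_sub_two_mul_κ, one_sub_q, σ]
  field_simp
  ring

theorem arg_sq_lt_one {n : ℕ} {x : ℝ} (hx : x ∈ Icc (κ n) (κ (n + 1))) : arg n x ^ 2 < 1 := by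
  have hq := pow_pos q_pos n
  have h0 : 0 ≤ arg n x := by
    rw [arg, one_sub_two_mul_κ]
    exact div_nonneg (mul_nonneg pi_pos.le (by linarith [hx.1])) hq.le
  have hσ : arg n x ≤ σ := by
    rw [← arg_κ_succ n, arg, arg, one_sub_two_mul_κ]
    gcongr
    exact hx.2
  nlinarith [q_sq_add_σ_sq, q_pos]

theorem piece_κ_succ (n : ℕ) : piece n (κ (n + 1)) = piece (n + 1) (κ (n + 1)) := by
  simp only [piece, arg_κ_succ, arg_κ, arcsin_zero]
  push_cast
  ring

theorem hasDerivAt_piece {n : ℕ} {x : ℝ} (hx : arg n x ^ 2 < 1) :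
    HasDerivAt (piece n) (pieceDeriv n x) x := by
  have habs : |arg n x| < 1 := by rwa [← sq_lt_one_iff_abs_lt_one]
  have harg : HasDerivAt (arg n) (π / (1 - 2 * κ n)) x := by
    have := (((hasDerivAt_id x).sub_const (κ n)).const_mul π).div_const (1 - 2 * κ n)
    simp only [id, mul_one] at this
    exact this
  have harcsin := (hasDerivAt_arcsin (abs_lt.1 habs).1.ne' (abs_lt.1 habs).2.ne).comp x harg
  refine ((harcsin.const_mul (1 / 2 : ℝ)).const_add ((n : ℝ) / 2 * arcsin σ)).congr_deriv ?_
  simp only [pieceDeriv, div_eq_mul_inv, mul_inv]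
  ring

theorem continuousAt_pieceDeriv {n : ℕ} {x : ℝ} (hx : arg n x ^ 2 < 1) :
    ContinuousAt (pieceDeriv n) x := by
  have hκ : 1 - 2 * κ n ≠ 0 := by rw [one_sub_two_mul_κ]; exact (pow_pos q_pos n).ne'
  have hsqrt : √(1 - arg n x ^ 2) ≠ 0 := (sqrt_pos.2 (by linarith)).ne'
  have hden : Continuous fun y => 2 * (1 - 2 * κ n) * √(1 - arg n y ^ 2) := by
    unfold arg; fun_prop
  exact continuousAt_const.div hden.continuousAt (mul_ne_zero (mul_ne_zero two_ne_zero hκ) hsqrt)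

theorem pieceDeriv_κ (n : ℕ) : pieceDeriv n (κ n) = π / 2 / (1 - 2 * κ n) := by
  rw [pieceDeriv, arg_κ, div_div]
  simp

theorem pieceDeriv_κ_succ (n : ℕ) :
    pieceDeriv n (κ (n + 1)) = π / 2 / (1 - 2 * κ (n + 1)) := by
  have hsqrt : √(1 - σ ^ 2) = q := by
    rw [← q_sq_add_σ_sq, add_sub_cancel_right, sqrt_sq q_pos.le]
  rw [pieceDeriv, arg_κ_succ, hsqrt, one_sub_two_mul_κ, one_sub_two_mul_κ, pow_succ]
  ring

theorem pieceDeriv_eq_of_mem_Icc {m n : ℕ} {x : ℝ} (hm : x ∈ Icc (κ m) (κ (m + 1)))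
    (hn : x ∈ Icc (κ n) (κ (n + 1))) : pieceDeriv m x = pieceDeriv n x := by
  wlog hmn : m ≤ n generalizing m n
  · exact (this hn hm (le_of_not_ge hmn)).symm
  rcases hmn.eq_or_lt with rfl | hlt
  · rfl
  have hnm : n = m + 1 := le_antisymm (κ_strictMono.le_iff_le.1 (hn.1.trans hm.2)) hlt
  subst hnm
  rw [le_antisymm hm.2 hn.1, pieceDeriv_κ_succ, pieceDeriv_κ]

section Glued

variable {M : ℝ → ℝ} (hM : ∀ n, EqOn M (piece n) (Ico (κ n) (κ (n + 1))))
include hM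

theorem eqOn_piece_Icc (n : ℕ) : EqOn M (piece n) (Icc (κ n) (κ (n + 1))) := by
  intro x hx
  rcases hx.2.lt_or_eq with hlt | rfl
  · exact hM n ⟨hx.1, hlt⟩
  · rw [piece_κ_succ, hM (n + 1) ⟨le_rfl, κ_strictMono (n + 1).lt_succ_self⟩]

theorem hasDerivAt_of_mem_Icc {n : ℕ} {x : ℝ} (hx0 : 0 < x) (hx : x ∈ Icc (κ n) (κ (n + 1))) :
    HasDerivAt M (pieceDeriv n x) x := by
  have hx1 : x < 1 / 2 := hx.2.trans_lt (κ_lt_half _)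
  obtain ⟨m, hm⟩ := exists_mem_Ioc hx0 hx1
  obtain ⟨k, hk⟩ := exists_mem_Ico hx0.le hx1
  have hm' : x ∈ Icc (κ m) (κ (m + 1)) := Ioc_subset_Icc_self hm
  have hk' : x ∈ Icc (κ k) (κ (k + 1)) := Ico_subset_Icc_self hk
  refine hasDerivAt_of_eqOn_Ioc_of_eqOn_Ico hm.1 hk.2
    ((eqOn_piece_Icc hM m).mono (Ioc_subset_Icc_self.trans (Icc_subset_Icc le_rfl hm.2)))
    ((hM k).mono (Ico_subset_Ico hk.1 le_rfl)) ?_ ?_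
  · rw [pieceDeriv_eq_of_mem_Icc hx hm']
    exact hasDerivAt_piece (arg_sq_lt_one hm')
  · rw [pieceDeriv_eq_of_mem_Icc hx hk']
    exact hasDerivAt_piece (arg_sq_lt_one hk')

theorem deriv_eqOn_pieceDeriv (n : ℕ) :
    EqOn (deriv M) (pieceDeriv n) (Icc (κ n) (κ (n + 1)) ∩ Ioi 0) :=
  fun _ hx => (hasDerivAt_of_mem_Icc hM hx.2 hx.1).deriv

theorem contDiffOn_Ioo : ContDiffOn ℝ 1 M (Ioo 0 (1 / 2)) := by
  rw [show (1 : WithTop ℕ∞) = 0 + 1 from rfl, contDiffOn_succ_iff_deriv_of_isOpen isOpen_Ioo,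
    contDiffOn_zero]
  refine ⟨fun x hx => ?_, by simp, fun x hx => ?_⟩
  · obtain ⟨n, hn⟩ := exists_mem_Ico hx.1.le hx.2
    exact (hasDerivAt_of_mem_Icc hM hx.1 (Ico_subset_Icc_self hn)).differentiableAt
      |>.differentiableWithinAt
  obtain ⟨m, hm⟩ := exists_mem_Ioc hx.1 hx.2
  obtain ⟨k, hk⟩ := exists_mem_Ico hx.1.le hx.2
  refine (continuousAt_of_eqOn_Ioc_of_eqOn_Ico hm.1 hk.2 (fun y hy => ?_) (fun y hy => ?_)
    (continuousAt_pieceDeriv (arg_sq_lt_one (Ioc_subset_Icc_self hm)))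
    (continuousAt_pieceDeriv (arg_sq_lt_one (Ico_subset_Icc_self hk)))).continuousWithinAt
  · exact deriv_eqOn_pieceDeriv hM m
      ⟨⟨hy.1.le, hy.2.trans hm.2⟩, (κ_zero ▸ κ_strictMono.monotone (Nat.zero_le m)).trans_lt hy.1⟩
  · exact deriv_eqOn_pieceDeriv hM k ⟨⟨hk.1.trans hy.1, hy.2.le⟩, hx.1.trans_le hy.1⟩

end Glued

end Mstar

open Mstar

/-- For any function `M` satisfying the piecewise definition of `M_⋆`, the one-sided
derivatives agree at each junction point `κ n` (`n ≥ 1`), both being equal to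
`(π/2)/(1 − 2 κ n)`; consequently `M` is continuously differentiable on `(0, 1/2)`. -/
theorem Mstar_onesided_derivs_agree (M : ℝ → ℝ)
    (hM : ∀ n : ℕ, ∀ x ∈ Set.Ico ((1 - ((π ^ 2 - 4) / (π ^ 2 + 4)) ^ n) / 2)
        ((1 - ((π ^ 2 - 4) / (π ^ 2 + 4)) ^ (n + 1)) / 2),
      M x = (n : ℝ) / 2 * Real.arcsin (4 * π / (π ^ 2 + 4))
          + 1 / 2 * Real.arcsin (π * (x - (1 - ((π ^ 2 - 4) / (π ^ 2 + 4)) ^ n) / 2)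
              / (1 - 2 * ((1 - ((π ^ 2 - 4) / (π ^ 2 + 4)) ^ n) / 2)))) :
    (∀ n : ℕ, 1 ≤ n →
        HasDerivWithinAt M
          ((π / 2) / (1 - 2 * ((1 - ((π ^ 2 - 4) / (π ^ 2 + 4)) ^ n) / 2)))
          (Set.Iio ((1 - ((π ^ 2 - 4) / (π ^ 2 + 4)) ^ n) / 2))
          ((1 - ((π ^ 2 - 4) / (π ^ 2 + 4)) ^ n) / 2) ∧
        HasDerivWithinAt M
          ((π / 2) / (1 - 2 * ((1 - ((π ^ 2 - 4) / (π ^ 2 + 4)) ^ n) / 2)))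
          (Set.Ioi ((1 - ((π ^ 2 - 4) / (π ^ 2 + 4)) ^ n) / 2))
          ((1 - ((π ^ 2 - 4) / (π ^ 2 + 4)) ^ n) / 2)) ∧
      ContDiffOn ℝ 1 M (Set.Ioo (0 : ℝ) (1 / 2)) := by
  have hM' : ∀ n, EqOn M (piece n) (Ico (κ n) (κ (n + 1))) := hM
  refine ⟨fun n hn => ?_, contDiffOn_Ioo hM'⟩
  have hderiv : HasDerivAt M (π / 2 / (1 - 2 * κ n)) (κ n) := by
    rw [← pieceDeriv_κ]
    exact hasDerivAt_of_mem_Icc hM' (κ_zero ▸ κ_strictMono hn)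
      ⟨le_rfl, (κ_strictMono n.lt_succ_self).le⟩
  exact ⟨hderiv.hasDerivWithinAt, hderiv.hasDerivWithinAt⟩
end

section
/- The number c_⋆ = 16·(π⁶ − 2π⁴ + 32π² − 32)/(π²+4)⁴ lies in the interval [κ_2, κ_3) and satisfies arcsin(4π/(π²+4)) + (1/2)·arcsin(π(c_⋆ − κ_2)/(1 − 2κ_2)) = π/2, where κ_2 = 8π²/(π²+4)². -/
open Real

/-- The number `c_⋆ = 16(π⁶ − 2π⁴ + 32π² − 32)/(π²+4)⁴` lies in `[κ 2, κ 3)` and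
satisfies `arcsin(4π/(π²+4)) + (1/2) arcsin(π(c_⋆ − κ 2)/(1 − 2 κ 2)) = π/2`,
where `κ 2 = 8π²/(π²+4)²`. -/
theorem cstar_in_interval_and_equation :
    (1 - ((π ^ 2 - 4) / (π ^ 2 + 4)) ^ 2) / 2 = 8 * π ^ 2 / (π ^ 2 + 4) ^ 2 ∧
      16 * (π ^ 6 - 2 * π ^ 4 + 32 * π ^ 2 - 32) / (π ^ 2 + 4) ^ 4
        ∈ Set.Ico ((1 - ((π ^ 2 - 4) / (π ^ 2 + 4)) ^ 2) / 2)
            ((1 - ((π ^ 2 - 4) / (π ^ 2 + 4)) ^ 3) / 2) ∧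
      Real.arcsin (4 * π / (π ^ 2 + 4))
          + 1 / 2 * Real.arcsin
              (π * (16 * (π ^ 6 - 2 * π ^ 4 + 32 * π ^ 2 - 32) / (π ^ 2 + 4) ^ 4
                      - 8 * π ^ 2 / (π ^ 2 + 4) ^ 2)
                / (1 - 2 * (8 * π ^ 2 / (π ^ 2 + 4) ^ 2)))
        = π / 2 := by
  have hπ := Real.pi_gt_d6
  have hπ' := Real.pi_lt_d2
  have h4 : (0:ℝ) < π ^ 2 + 4 := by positivity
  have hπ2 : (4:ℝ) < π ^ 2 := by nlinarith
  have hπ12 : π ^ 2 < 12 := by nlinarith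
  have hne : π ^ 2 + 4 ≠ 0 := ne_of_gt h4
  have hne2 : π ^ 2 - 4 ≠ 0 := by nlinarith
  have hk2 : (1 - ((π ^ 2 - 4) / (π ^ 2 + 4)) ^ 2) / 2 = 8 * π ^ 2 / (π ^ 2 + 4) ^ 2 := by
    field_simp; ring
  refine ⟨hk2, ⟨?_, ?_⟩, ?_⟩
  · rw [hk2, div_le_div_iff₀ (by positivity) (by positivity)]
    nlinarith [mul_nonneg (mul_nonneg (sq_nonneg (π ^ 2 + 4))
      (sq_nonneg (π ^ 2 - 4))) (le_of_lt (sub_pos.mpr hπ2))]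
  · rw [show (1 - ((π ^ 2 - 4) / (π ^ 2 + 4)) ^ 3) / 2 = (12 * π ^ 4 + 64) / (π ^ 2 + 4) ^ 3
      from by field_simp; ring]
    rw [div_lt_div_iff₀ (by positivity) (by positivity)]
    nlinarith [mul_pos (mul_pos (mul_pos (sub_pos.mpr hπ2) (sub_pos.mpr hπ2))
      (by nlinarith : (0:ℝ) < 48 - 4 * π ^ 2)) (pow_pos h4 4)]
  · have hs1 : 4 * π / (π ^ 2 + 4) ≤ 1 := by
      rw [div_le_one h4]; nlinarith [sq_nonneg (π - 2)]
    have hs0 : (0:ℝ) ≤ 4 * π / (π ^ 2 + 4) := by positivity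
    set θ := Real.arcsin (4 * π / (π ^ 2 + 4)) with hθ
    have hsin : Real.sin θ = 4 * π / (π ^ 2 + 4) := Real.sin_arcsin (by linarith) hs1
    have hcos : Real.cos θ = (π ^ 2 - 4) / (π ^ 2 + 4) := by
      rw [hθ, Real.cos_arcsin,
        show 1 - (4 * π / (π ^ 2 + 4)) ^ 2 = ((π ^ 2 - 4) / (π ^ 2 + 4)) ^ 2 by
          field_simp; ring]
      exact Real.sqrt_sq (div_nonneg (by nlinarith) (le_of_lt h4))
    have hXeq : π * (16 * (π ^ 6 - 2 * π ^ 4 + 32 * π ^ 2 - 32) / (π ^ 2 + 4) ^ 4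
          - 8 * π ^ 2 / (π ^ 2 + 4) ^ 2) / (1 - 2 * (8 * π ^ 2 / (π ^ 2 + 4) ^ 2))
        = 8 * π * (π ^ 2 - 4) / (π ^ 2 + 4) ^ 2 := by
      have hden : 1 - 2 * (8 * π ^ 2 / (π ^ 2 + 4) ^ 2)
          = (π ^ 2 - 4) ^ 2 / (π ^ 2 + 4) ^ 2 := by field_simp; ring
      rw [hden]
      field_simp
      ring
    -- θ ≥ π/4
    have hquarter : π / 4 ≤ θ := by
      have h2 : Real.sin (π / 4) ≤ 4 * π / (π ^ 2 + 4) := by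
        rw [Real.sin_pi_div_four]
        rw [div_le_div_iff₀ (by norm_num) h4]
        nlinarith [Real.sq_sqrt (by norm_num : (2:ℝ) ≥ 0), Real.sqrt_nonneg 2,
          sq_nonneg (Real.sqrt 2 - 1.5)]
      calc π / 4 = Real.arcsin (Real.sin (π / 4)) := by
            rw [Real.arcsin_sin (by linarith [Real.pi_pos]) (by linarith [Real.pi_pos])]
        _ ≤ θ := Real.monotone_arcsin h2
    have hhalf : θ ≤ π / 2 := Real.arcsin_le_pi_div_two _
    have harg : 8 * π * (π ^ 2 - 4) / (π ^ 2 + 4) ^ 2 = Real.sin (π - 2 * θ) := by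
      rw [Real.sin_pi_sub, Real.sin_two_mul, hsin, hcos]
      field_simp; ring
    rw [hXeq, harg, Real.arcsin_sin (by linarith) (by linarith)]
    ring
end

section
/- For all x ∈ (0, c_KMM], M_MS(x) < M_KMM(x), where M_MS(x) = (π/4)·log(1/(1−2x)), M_KMM(x) = arcsin(πx/(2(1−x))), and c_KMM = 2/(2+π). -/
/-!
With `g(t) = πt/(2(1−t))`, the gap `f(t) = arcsin g(t) + (π/4) log(1−2t)` vanishes at `0`, and
`f'(t) = g'(t)/√(1−g(t)²) − π/(2(1−2t))` with `g'(t) = π/(2(1−t)²)`. So `f' > 0` amounts to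
`(1−t)⁴ (1−g²) < (1−2t)²`, i.e. `t² (2(1−t)² − t²) < π² t² (1−t)²/4`, which holds because `π² > 8`.
Hence `f` is strictly increasing on `[0, 2/(2+π)]`, the interval on which `g ≤ 1`.
-/

open Real Set

theorem two_div_two_add_pi_lt_half : 2 / (2 + π) < 1 / 2 := by
  rw [div_lt_div_iff₀ (by positivity) two_pos]
  linarith [pi_gt_three]

theorem pi_mul_div_two_mul_one_sub_mem_Ioo {t : ℝ} (ht0 : 0 < t) (ht : t < 2 / (2 + π)) :
    π * t / (2 * (1 - t)) ∈ Ioo 0 1 := by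
  have ht1 : 0 < 1 - t := by linarith [two_div_two_add_pi_lt_half]
  refine ⟨by positivity, ?_⟩
  rw [div_lt_one (by positivity)]
  rw [lt_div_iff₀ (by positivity)] at ht
  linarith

theorem hasDerivAt_mul_div_two_mul_one_sub (a : ℝ) {t : ℝ} (ht : t ≠ 1) :
    HasDerivAt (fun t => a * t / (2 * (1 - t))) (a / (2 * (1 - t) ^ 2)) t := by
  have hden : 2 * (1 - t) ≠ 0 := mul_ne_zero two_ne_zero (sub_ne_zero.2 ht.symm)
  refine (((hasDerivAt_id t).const_mul a).div
    (((hasDerivAt_id t).const_sub 1).const_mul 2) hden).congr_deriv ?_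
  simp only [id]
  field_simp
  ring

theorem one_sub_sq_mul_sqrt_lt {t : ℝ} (ht0 : 0 < t) (ht : t < 1 / 2) :
    (1 - t) ^ 2 * √(1 - (π * t / (2 * (1 - t))) ^ 2) < 1 - 2 * t := by
  have ht1 : 1 - t ≠ 0 := by linarith
  rw [← sqrt_sq (sq_nonneg (1 - t)), ← sqrt_mul (sq_nonneg _), sqrt_lt' (by linarith)]
  have hexpand : ((1 - t) ^ 2) ^ 2 * (1 - (π * t / (2 * (1 - t))) ^ 2)
      = (1 - 2 * t) ^ 2 + t ^ 2 * (2 * (1 - t) ^ 2 - t ^ 2) - π ^ 2 * t ^ 2 * (1 - t) ^ 2 / 4 := by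
    field_simp
    ring
  have hpi : 8 < π ^ 2 := by nlinarith [pi_gt_three]
  rw [hexpand]
  nlinarith [pow_pos ht0 4, mul_nonneg (sub_pos.2 hpi).le (sq_nonneg (t * (1 - t)))]

/-- `M_KMM − M_MS`, with `log (1 / (1 − 2t))` written as `−log (1 − 2t)`. -/
noncomputable def kmmGap (t : ℝ) : ℝ :=
  arcsin (π * t / (2 * (1 - t))) + π / 4 * log (1 - 2 * t)

theorem hasDerivAt_kmmGap {t : ℝ} (ht0 : 0 < t) (ht : t < 2 / (2 + π)) :
    HasDerivAt kmmGap
      (π / (2 * (1 - t) ^ 2) / √(1 - (π * t / (2 * (1 - t))) ^ 2) - π / (2 * (1 - 2 * t))) t := by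
  have ht1 : t ≠ 1 := by linarith [two_div_two_add_pi_lt_half]
  have ht2 : 1 - 2 * t ≠ 0 := by linarith [two_div_two_add_pi_lt_half]
  obtain ⟨hg0, hg1⟩ := pi_mul_div_two_mul_one_sub_mem_Ioo ht0 ht
  have harcsin := (hasDerivAt_arcsin (by linarith) hg1.ne).comp t
    (hasDerivAt_mul_div_two_mul_one_sub π ht1)
  have hlog := ((hasDerivAt_log ht2).comp t (((hasDerivAt_id t).const_mul 2).const_sub 1)).const_mul
    (π / 4)
  refine (harcsin.add hlog).congr_deriv ?_
  field_simp
  ring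

theorem deriv_kmmGap_pos {t : ℝ} (ht0 : 0 < t) (ht : t < 2 / (2 + π)) : 0 < deriv kmmGap t := by
  have ht1 : 0 < 1 - t := by linarith [two_div_two_add_pi_lt_half]
  have ht2 : 0 < 1 - 2 * t := by linarith [two_div_two_add_pi_lt_half]
  have hkey := one_sub_sq_mul_sqrt_lt ht0 (ht.trans two_div_two_add_pi_lt_half)
  obtain ⟨hg0, hg1⟩ := pi_mul_div_two_mul_one_sub_mem_Ioo ht0 ht
  have hsqrt : 0 < √(1 - (π * t / (2 * (1 - t))) ^ 2) := sqrt_pos.2 (by nlinarith)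
  rw [(hasDerivAt_kmmGap ht0 ht).deriv, sub_pos, div_div, div_lt_div_iff_of_pos_left pi_pos
    (by positivity) (mul_pos (mul_pos two_pos (pow_pos ht1 2)) hsqrt)]
  linarith

theorem continuousOn_kmmGap : ContinuousOn kmmGap (Iio (1 / 2)) := by
  intro t (ht : t < 1 / 2)
  have ht1 : 2 * (1 - t) ≠ 0 := by linarith
  have ht2 : 1 - 2 * t ≠ 0 := by linarith
  refine ContinuousAt.continuousWithinAt (.add ?_ (by fun_prop (disch := assumption)))
  exact continuous_arcsin.continuousAt.comp (by fun_prop (disch := assumption))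

theorem strictMonoOn_kmmGap : StrictMonoOn kmmGap (Icc 0 (2 / (2 + π))) := by
  apply strictMonoOn_of_deriv_pos (convex_Icc _ _)
  · exact continuousOn_kmmGap.mono fun t ht => ht.2.trans_lt two_div_two_add_pi_lt_half
  · rw [interior_Icc]
    exact fun t ht => deriv_kmmGap_pos ht.1 ht.2

/-- For all `x ∈ (0, c_KMM]` with `c_KMM = 2/(2+π)`, one has
`(π/4) log(1/(1−2x)) < arcsin(πx/(2(1−x)))`. -/
theorem MMS_lt_MKMM (x : ℝ) (hx0 : 0 < x) (hx : x ≤ 2 / (2 + π)) :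
    π / 4 * Real.log (1 / (1 - 2 * x)) < Real.arcsin (π * x / (2 * (1 - x))) := by
  have hgap : kmmGap 0 < kmmGap x :=
    strictMonoOn_kmmGap ⟨le_rfl, hx0.le.trans hx⟩ ⟨hx0.le, hx⟩ hx0
  simp only [kmmGap, mul_zero, zero_div, arcsin_zero, sub_zero, log_one, add_zero] at hgap
  rw [one_div, log_inv]
  linarith
end
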